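/- For any linear functional ω(A) = Tr(A·R) with R ∈ 𝔄, and the form ⟨A,B⟩ := ω(Θ(A)∘B), one has ⟨Θ(A), Θ(B)⟩ = ⟨B, A⟩ for all A, B ∈ 𝔄₊. Consequently, ω is reflection positive on 𝔄₊ (i.e. 0 ≤ ω(Θ(A)∘A) for all A ∈ 𝔄₊) if and only if ω is reflection positive on 𝔄₋ (i.e. 0 ≤ ω(Θ(B)∘B) for all B ∈ 𝔄₋). -/

import Mathlib

open ComplexOrder

noncomputable section

/-- The setting of the paper: a finite set `Λ` with a fixed-point free involution `ϑ`
exchanging `Λp` and its complement, the Clifford algebra (algebra of Majoranas) `carrier`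
with self-adjoint generators `c i`, the global gauge automorphism `gauge`, the antilinear
reflection `*`-automorphism `Θ`, a square root `ζ` of `-1`, the twisted product `twist`,
a choice `P` of orderings of the subsets of `Λp` (giving the bases
`{C J : J ∈ P}` of `𝔄₊` and `{Θ(C J) ∘ C J' : J, J' ∈ P}` of `𝔄`),
and the tracial state `Tr` picking out the coefficient of `1` in the basis expansion. -/
structure MajoranaSetting where
  Λ : Type
  [fintypeΛ : Fintype Λ]
  [deceqΛ : DecidableEq Λ]
  ϑ : Λ → Λ
  ϑ_invol : Function.Involutive ϑ
  ϑ_fixfree : ∀ i, ϑ i ≠ i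
  Λp : Finset Λ
  ϑ_exch : ∀ i, i ∈ Λp ↔ ϑ i ∉ Λp
  carrier : Type
  [nring : NormedRing carrier]
  [nalg : NormedAlgebra ℂ carrier]
  [cmpl : CompleteSpace carrier]
  [starring : StarRing carrier]
  [starmod : StarModule ℂ carrier]
  c : Λ → carrier
  c_star : ∀ i, star (c i) = c i
  clifford : ∀ i j, c i * c j + c j * c i = if i = j then (2 : carrier) else 0
  gauge : carrier ≃ₐ[ℂ] carrier
  gauge_c : ∀ i, gauge (c i) = - c i
  Θ : carrier → carrier
  Θ_add : ∀ x y, Θ (x + y) = Θ x + Θ y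
  Θ_smul : ∀ (z : ℂ) (x), Θ (z • x) = (starRingEnd ℂ z) • Θ x
  Θ_mul : ∀ x y, Θ (x * y) = Θ x * Θ y
  Θ_star : ∀ x, Θ (star x) = star (Θ x)
  Θ_invol : ∀ x, Θ (Θ x) = x
  Θ_c : ∀ i, Θ (c i) = c (ϑ i)
  ζ : ℂ
  ζ_sq : ζ ^ 2 = -1
  twist : carrier → carrier → carrier
  twist_add_left : ∀ x x' y, twist (x + x') y = twist x y + twist x' y
  twist_add_right : ∀ x y y', twist x (y + y') = twist x y + twist x y'
  twist_smul_left : ∀ (z : ℂ) (x y), twist (z • x) y = z • twist x y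
  twist_smul_right : ∀ (z : ℂ) (x y), twist x (z • y) = z • twist x y
  twist_spec : ∀ (Am Ap Bm Bp : carrier) (a b a' b' : ℕ),
    a ≤ 1 → b ≤ 1 → a' ≤ 1 → b' ≤ 1 →
    Am ∈ Algebra.adjoin ℂ (c '' {i | i ∉ Λp}) →
    Ap ∈ Algebra.adjoin ℂ (c '' {i | i ∈ Λp}) →
    Bm ∈ Algebra.adjoin ℂ (c '' {i | i ∉ Λp}) →
    Bp ∈ Algebra.adjoin ℂ (c '' {i | i ∈ Λp}) →
    gauge Am = ((-1 : ℂ) ^ a) • Am →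
    gauge Ap = ((-1 : ℂ) ^ b) • Ap →
    gauge Bm = ((-1 : ℂ) ^ a') • Bm →
    gauge Bp = ((-1 : ℂ) ^ b') • Bp →
    twist (Am * Ap) (Bm * Bp)
      = ζ ^ ((a * b' : ℤ) - (b * a' : ℤ)) • (Am * Ap * (Bm * Bp))
  P : Finset (List Λ)
  P_nodup : ∀ J ∈ P, J.Nodup
  P_sub : ∀ J ∈ P, ∀ i ∈ J, i ∈ Λp
  P_unique : ∀ s : Finset Λ, s ⊆ Λp → ∃! J, J ∈ P ∧ J.toFinset = s
  Tr : carrier →ₗ[ℂ] ℂ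
  Tr_basis : ∀ J ∈ P, ∀ J' ∈ P,
    Tr (twist (Θ ((J.map c).prod)) ((J'.map c).prod))
      = if J = [] ∧ J' = [] then 1 else 0
  basis_indep : LinearIndependent ℂ
    (fun p : {J // J ∈ P} × {J // J ∈ P} =>
      twist (Θ ((p.1.1.map c).prod)) ((p.2.1.map c).prod))
  basis_span : ∀ x : carrier, x ∈ Submodule.span ℂ
    (Set.range fun p : {J // J ∈ P} × {J // J ∈ P} =>
      twist (Θ ((p.1.1.map c).prod)) ((p.2.1.map c).prod))
  plus_span : ∀ x ∈ Algebra.adjoin ℂ (c '' {i | i ∈ Λp}),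
    x ∈ Submodule.span ℂ (Set.range fun J : {J // J ∈ P} => ((J.1.map c).prod))

attribute [instance] MajoranaSetting.fintypeΛ MajoranaSetting.deceqΛ
  MajoranaSetting.nring MajoranaSetting.nalg MajoranaSetting.cmpl
  MajoranaSetting.starring MajoranaSetting.starmod

namespace MajoranaSetting

variable (S : MajoranaSetting)

/-- The subalgebra `𝔄₊` generated by the Majoranas on the `+` side. -/
def Aplus : Subalgebra ℂ S.carrier := Algebra.adjoin ℂ (S.c '' {i | i ∈ S.Λp})

/-- The subalgebra `𝔄₋` generated by the Majoranas on the `-` side. -/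
def Aminus : Subalgebra ℂ S.carrier := Algebra.adjoin ℂ (S.c '' {i | i ∉ S.Λp})

/-- The monomial `C_𝔍 = c_{i₁} ⋯ c_{i_k}`. -/
def C (J : List S.Λ) : S.carrier := (J.map S.c).prod

/-- `q_𝔍 = (-1)^{k(k-1)/2}`. -/
def q (J : List S.Λ) : ℂ := (-1 : ℂ) ^ (J.length * (J.length - 1) / 2)

/-- `s_𝔍 = ζ^{k(k-1)/2}`. -/
def sgn (J : List S.Λ) : ℂ := S.ζ ^ (J.length * (J.length - 1) / 2)

/-- The exponential `e^x` in the (finite-dimensional) algebra `𝔄`. -/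
def expm (x : S.carrier) : S.carrier := NormedSpace.exp x

/-- The Hamiltonian `H = -∑_{𝔍,𝔍' ∈ 𝒫₊} J_{𝔍𝔍'} Θ(C_𝔍) ∘ C_𝔍'`
determined by coupling constants `Jc`. -/
def Ham (Jc : List S.Λ → List S.Λ → ℂ) : S.carrier :=
  - ∑ J ∈ S.P, ∑ J' ∈ S.P, Jc J J' • S.twist (S.Θ (S.C J)) (S.C J')

/-- The index type of the basis `{C J : J ∈ 𝒫₊}`. -/
abbrev PIdx := {J : List S.Λ // J ∈ S.P}

/-- The index type `𝒫₊ - {∅}` of couplings across the reflection plane. -/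
abbrev PIdx0 := {p : S.PIdx // p.1 ≠ []}

/-- The full matrix of coupling constants. -/
def Jmat (Jc : List S.Λ → List S.Λ → ℂ) : Matrix S.PIdx S.PIdx ℂ :=
  Matrix.of fun p q => Jc p.1 q.1

/-- The matrix `J⁰` of coupling constants across the reflection plane. -/
def Jmat0 (Jc : List S.Λ → List S.Λ → ℂ) : Matrix S.PIdx0 S.PIdx0 ℂ :=
  Matrix.of fun p q => Jc p.1.1 q.1.1

end MajoranaSetting

/-!
Write `⟨A, B⟩ = Tr(Θ(A) ∘ B · R)`. For `A, B ∈ 𝔄₊` the symmetry `⟨Θ A, Θ B⟩ = ⟨B, A⟩` amounts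
to `A ∘ Θ(B) = Θ(B) ∘ A`, and by sesquilinearity it suffices to check this on monomials
`A = C_𝔍`, `Θ(B) = Θ(C_𝔍')` of parities `a` and `b`. These lie in `𝔄₊` and `𝔄₋`, so
`A · Θ(B) = (-1)^{ab} Θ(B) · A`, while the twist contributes `ζ^{-ab}` on one side and `ζ^{ab}`
on the other; the two signs cancel because `ζ² = -1`. Since `Θ` exchanges `𝔄₊` and `𝔄₋`,
the symmetry applied to `A = Θ(B)` turns positivity on one side into positivity on the other.
-/

namespace MajoranaSetting

variable (S : MajoranaSetting)

lemma Θ_zero : S.Θ 0 = 0 := by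
  simpa using S.Θ_smul 0 0

lemma Θ_one : S.Θ 1 = 1 := by
  simpa only [mul_one, S.Θ_invol, one_mul] using (S.Θ_mul (S.Θ 1) 1).symm

lemma twist_zero_left (y : S.carrier) : S.twist 0 y = 0 := by
  simpa using S.twist_smul_left 0 0 y

lemma twist_zero_right (x : S.carrier) : S.twist x 0 = 0 := by
  simpa using S.twist_smul_right 0 x 0

lemma C_mem_adjoin {s : Set S.Λ} {J : List S.Λ} (hJ : ∀ i ∈ J, i ∈ s) :
    S.C J ∈ Algebra.adjoin ℂ (S.c '' s) := by
  induction J with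
  | nil => exact one_mem _
  | cons i J ih =>
    exact mul_mem (Algebra.subset_adjoin ⟨i, hJ i List.mem_cons_self, rfl⟩)
      (ih fun j hj => hJ j (List.mem_cons_of_mem i hj))

lemma gauge_C (J : List S.Λ) : S.gauge (S.C J) = (-1 : ℂ) ^ J.length • S.C J := by
  induction J with
  | nil => simp [C]
  | cons i J ih =>
    simp only [C, List.map_cons, List.prod_cons, map_mul, S.gauge_c] at ih ⊢
    rw [ih, List.length_cons, pow_succ, mul_smul, mul_smul_comm, neg_one_smul, neg_mul]

lemma Θ_C (J : List S.Λ) : S.Θ (S.C J) = S.C (J.map S.ϑ) := by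
  induction J with
  | nil => exact S.Θ_one
  | cons i J ih =>
    simp only [C, List.map_cons, List.prod_cons] at ih ⊢
    rw [S.Θ_mul, S.Θ_c, ih]

lemma Θ_mem_adjoin {s t : Set S.Λ} (hst : ∀ i ∈ s, S.ϑ i ∈ t) {x : S.carrier}
    (hx : x ∈ Algebra.adjoin ℂ (S.c '' s)) : S.Θ x ∈ Algebra.adjoin ℂ (S.c '' t) := by
  induction hx using Algebra.adjoin_induction with
  | mem y hy =>
    obtain ⟨i, hi, rfl⟩ := hy
    rw [S.Θ_c]
    exact Algebra.subset_adjoin ⟨S.ϑ i, hst i hi, rfl⟩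
  | algebraMap r =>
    rw [Algebra.algebraMap_eq_smul_one, S.Θ_smul, S.Θ_one]
    exact Subalgebra.smul_mem _ (one_mem _) _
  | add x y _ _ hx hy => rw [S.Θ_add]; exact add_mem hx hy
  | mul x y _ _ hx hy => rw [S.Θ_mul]; exact mul_mem hx hy

lemma Θ_mem_Aminus {x : S.carrier} (hx : x ∈ S.Aplus) : S.Θ x ∈ S.Aminus :=
  S.Θ_mem_adjoin (fun i hi => (S.ϑ_exch i).mp hi) hx

lemma Θ_mem_Aplus {x : S.carrier} (hx : x ∈ S.Aminus) : S.Θ x ∈ S.Aplus :=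
  S.Θ_mem_adjoin (fun i hi => (S.ϑ_exch (S.ϑ i)).mpr (by rwa [S.ϑ_invol i])) hx

lemma c_mul_eq_gauge_mul_c {j : S.Λ} (hj : j ∈ S.Λp) {x : S.carrier} (hx : x ∈ S.Aminus) :
    S.c j * x = S.gauge x * S.c j := by
  induction hx using Algebra.adjoin_induction with
  | mem y hy =>
    obtain ⟨i, hi, rfl⟩ := hy
    have hji : j ≠ i := fun h => hi (h ▸ hj)
    have hanti := S.clifford j i
    rw [if_neg hji] at hanti
    rw [S.gauge_c, neg_mul]
    exact eq_neg_of_add_eq_zero_left hanti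
  | algebraMap r => rw [AlgEquiv.commutes, Algebra.commutes]
  | add x y _ _ hx hy => rw [mul_add, hx, hy, map_add, add_mul]
  | mul x y _ _ hx hy => rw [← mul_assoc, hx, mul_assoc, hy, ← mul_assoc, map_mul]

lemma C_mul_eq_smul_mul {J : List S.Λ} (hJ : ∀ i ∈ J, i ∈ S.Λp) {M : S.carrier}
    (hM : M ∈ S.Aminus) {ε : ℂ} (hgM : S.gauge M = ε • M) :
    S.C J * M = ε ^ J.length • (M * S.C J) := by
  induction J with
  | nil => simp [C]
  | cons i J ih =>
    simp only [C, List.map_cons, List.prod_cons, List.length_cons] at ih ⊢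
    rw [mul_assoc, ih fun j hj => hJ j (List.mem_cons_of_mem i hj), mul_smul_comm,
      ← mul_assoc, S.c_mul_eq_gauge_mul_c (hJ i List.mem_cons_self) hM, hgM, smul_mul_assoc,
      smul_mul_assoc, smul_smul, pow_succ, mul_assoc]

section Parity

variable {S} {A M : S.carrier} {a b : ℕ}

lemma twist_plus_minus (ha : a ≤ 1) (hb : b ≤ 1) (hA : A ∈ S.Aplus) (hM : M ∈ S.Aminus)
    (hgA : S.gauge A = (-1 : ℂ) ^ a • A) (hgM : S.gauge M = (-1 : ℂ) ^ b • M) :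
    S.twist A M = S.ζ ^ (-(a * b : ℤ)) • (A * M) := by
  have h := S.twist_spec 1 A M 1 0 a b 0 zero_le_one ha hb zero_le_one (one_mem _) hA hM
    (one_mem _) (by simp) hgA hgM (by simp)
  simpa using h

lemma twist_minus_plus (ha : a ≤ 1) (hb : b ≤ 1) (hA : A ∈ S.Aplus) (hM : M ∈ S.Aminus)
    (hgA : S.gauge A = (-1 : ℂ) ^ a • A) (hgM : S.gauge M = (-1 : ℂ) ^ b • M) :
    S.twist M A = S.ζ ^ (a * b : ℤ) • (M * A) := by
  have h := S.twist_spec M 1 1 A b 0 0 a hb zero_le_one zero_le_one ha hM (one_mem _)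
    (one_mem _) hA hgM (by simp) (by simp) hgA
  simpa [mul_comm] using h

lemma twist_comm_of_mul_eq_neg_one_pow_smul (ha : a ≤ 1) (hb : b ≤ 1) (hA : A ∈ S.Aplus)
    (hM : M ∈ S.Aminus) (hgA : S.gauge A = (-1 : ℂ) ^ a • A)
    (hgM : S.gauge M = (-1 : ℂ) ^ b • M) (hAM : A * M = (-1 : ℂ) ^ (a * b) • (M * A)) :
    S.twist A M = S.twist M A := by
  have hζ : S.ζ ≠ 0 := fun h => by simpa [h] using S.ζ_sq
  rw [twist_plus_minus ha hb hA hM hgA hgM, twist_minus_plus ha hb hA hM hgA hgM, hAM,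
    smul_smul, ← S.ζ_sq, ← pow_mul, ← zpow_natCast, ← zpow_add₀ hζ]
  push_cast
  ring_nf

end Parity

lemma twist_C_Θ_C_comm {J J' : List S.Λ} (hJ : ∀ i ∈ J, i ∈ S.Λp) (hJ' : ∀ i ∈ J', i ∈ S.Λp) :
    S.twist (S.C J) (S.Θ (S.C J')) = S.twist (S.Θ (S.C J')) (S.C J) := by
  have hA : S.C J ∈ S.Aplus := S.C_mem_adjoin hJ
  have hM : S.Θ (S.C J') ∈ S.Aminus := S.Θ_mem_Aminus (S.C_mem_adjoin hJ')
  have hgA : S.gauge (S.C J) = (-1 : ℂ) ^ (J.length % 2) • S.C J := by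
    rw [S.gauge_C, neg_one_pow_eq_pow_mod_two]
  have hgM : S.gauge (S.Θ (S.C J')) = (-1 : ℂ) ^ (J'.length % 2) • S.Θ (S.C J') := by
    rw [S.Θ_C, S.gauge_C, List.length_map, neg_one_pow_eq_pow_mod_two]
  refine twist_comm_of_mul_eq_neg_one_pow_smul (Nat.le_of_lt_succ (Nat.mod_lt _ two_pos))
    (Nat.le_of_lt_succ (Nat.mod_lt _ two_pos)) hA hM hgA hgM ?_
  rw [S.C_mul_eq_smul_mul hJ hM hgM, ← pow_mul, neg_one_pow_eq_pow_mod_two,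
    neg_one_pow_eq_pow_mod_two (R := ℂ) (n := _ * _), Nat.mul_mod, Nat.mul_comm]
  simp

lemma twist_Θ_comm {A B : S.carrier} (hA : A ∈ S.Aplus) (hB : B ∈ S.Aplus) :
    S.twist A (S.Θ B) = S.twist (S.Θ B) A := by
  have hA' := S.plus_span A hA
  have hB' := S.plus_span B hB
  clear hA hB
  induction hA' using Submodule.span_induction with
  | mem x hx =>
    obtain ⟨⟨J, hJ⟩, rfl⟩ := hx
    induction hB' using Submodule.span_induction with
    | mem y hy =>
      obtain ⟨⟨J', hJ'⟩, rfl⟩ := hy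
      exact S.twist_C_Θ_C_comm (S.P_sub J hJ) (S.P_sub J' hJ')
    | zero => rw [S.Θ_zero, S.twist_zero_left, S.twist_zero_right]
    | add y z _ _ hy hz => rw [S.Θ_add, S.twist_add_left, S.twist_add_right, hy, hz]
    | smul r y _ hy => rw [S.Θ_smul, S.twist_smul_left, S.twist_smul_right, hy]
  | zero => rw [S.twist_zero_left, S.twist_zero_right]
  | add x y _ _ hx hy => rw [S.twist_add_left, S.twist_add_right, hx, hy]
  | smul r x _ hx => rw [S.twist_smul_left, S.twist_smul_right, hx]

end MajoranaSetting

/-- `⟨Θ(A), Θ(B)⟩ = ⟨B, A⟩` for `A, B ∈ 𝔄₊`, and consequently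
`ω(A) = Tr(A·R)` is reflection positive on `𝔄₊` iff it is reflection positive
on `𝔄₋`. -/
theorem reflection_positivity_plus_iff_minus (S : MajoranaSetting) (R : S.carrier) :
    (∀ A ∈ S.Aplus, ∀ B ∈ S.Aplus,
      S.Tr (S.twist (S.Θ (S.Θ A)) (S.Θ B) * R) = S.Tr (S.twist (S.Θ B) A * R)) ∧
    ((∀ A ∈ S.Aplus, 0 ≤ S.Tr (S.twist (S.Θ A) A * R)) ↔
      (∀ B ∈ S.Aminus, 0 ≤ S.Tr (S.twist (S.Θ B) B * R))) := by
  have hsymm : ∀ A ∈ S.Aplus, ∀ B ∈ S.Aplus,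
      S.Tr (S.twist (S.Θ (S.Θ A)) (S.Θ B) * R) = S.Tr (S.twist (S.Θ B) A * R) :=
    fun A hA B hB => by rw [S.Θ_invol, S.twist_Θ_comm hA hB]
  refine ⟨hsymm, fun hplus B hB => ?_, fun hminus A hA => ?_⟩
  · have hB' := S.Θ_mem_Aplus hB
    have hBB := hsymm _ hB' _ hB'
    simp only [S.Θ_invol] at hBB
    simpa only [hBB, S.Θ_invol] using hplus _ hB'
  · simpa only [← hsymm A hA A hA] using hminus _ (S.Θ_mem_Aminus hA)
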